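/- Let b be an odd prime, a, n integers, and t > 1 an odd integer coprime to b. Then K(a,b,t;n) = ∑_{h=1}^{b-1} (ω_{h,b}/ω_{th,b}^t) e^{2πi(at-n)h/b} equals 𝕀(a,b,t,n)·(-1)^{(1-t)(b-1)/4}·(t/b), where 𝕀(a,b,t,n) = b-1 if (1/24)(1-t²)(1-b²) + at - n ≡ 0 (mod b) and -1 otherwise. -/

import Mathlib

open Complex Real

open scoped Classical in
/-- The sawtooth function `((x))`. -/
noncomputable def saw (x : ℝ) : ℝ :=
  if (⌊x⌋ : ℝ) = x then 0 else x - ⌊x⌋ - 1 / 2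

/-- The Dedekind sum `s(h,k) = ∑_{μ mod k} ((μ/k))((hμ/k))`. -/
noncomputable def dedekindSum (h : ℤ) (k : ℕ) : ℝ :=
  ∑ μ ∈ Finset.range k, saw ((μ : ℝ) / k) * saw ((h : ℝ) * μ / k)

/-- `ω_{h,k} = exp(πi·s(h,k))`. -/
noncomputable def dedekindOmega (h : ℤ) (k : ℕ) : ℂ :=
  Complex.exp (π * I * dedekindSum h k)

/-- The Kloosterman-type sum `K(a,b,t;n) = ∑_{h=1}^{b-1} (ω_{h,b}/ω_{th,b}^t) e^{2πi(at-n)h/b}`. -/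
noncomputable def Ksum (a : ℤ) (b : ℕ) (t : ℕ) (n : ℤ) : ℂ :=
  ∑ h ∈ Finset.Icc 1 (b - 1),
    dedekindOmega (h : ℤ) b / (dedekindOmega ((t : ℤ) * h) b) ^ t
      * Complex.exp (2 * π * I * (a * t - n) * h / b)

/-!
Write `U(c) = ∑_{μ<b} μ · (cμ mod b)`. For `c` prime to `b`, `s(c,b) = U(c)/b² - (b-1)/4`, and
expanding `∑ ((cμ mod b) - cμ)² ≡ 0 (mod b²)` gives `2cU(c) ≡ (1 + c²) ∑ μ² (mod b²)`; with
`24m = (1-t²)(1-b²)` this yields `U(h) - tU(th) = 2bmh + b²q`. Pairing `μ` with `b - μ` and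
Gauss's lemma give `(-1)^U(c) = (-1)^((b-1)/2) (c/b)`, so `(-1)^q = (h/b)(th/b) = (t/b)`. Hence
every summand of `K` is `(t/b) (-1)^((1-t)(b-1)/4) e^{2πi(m+at-n)h/b}`, and the geometric sum over
`h` is `b - 1` or `-1` according as `b` divides `m + at - n`.
-/

open Finset

lemma natCast_zmod_ne_zero_of_lt {b μ : ℕ} (h0 : μ ≠ 0) (hμ : μ < b) : (μ : ZMod b) ≠ 0 := by
  rw [Ne, ZMod.natCast_eq_zero_iff]
  exact fun h => h0 (Nat.eq_zero_of_dvd_of_lt h hμ)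

lemma saw_zero : saw 0 = 0 := by simp [saw]

lemma saw_intCast_div_natCast {b : ℕ} [NeZero b] {c : ℤ} (hc : (c : ZMod b) ≠ 0) :
    saw (c / b) = (c : ZMod b).val / b - 1 / 2 := by
  have hb : (0 : ℤ) < b := by exact_mod_cast Nat.pos_of_neZero b
  have hbR : (0 : ℝ) < b := by exact_mod_cast hb
  have hmod_pos : 0 < c % b := by
    refine (Int.emod_nonneg c hb.ne').lt_of_ne fun h => hc ?_
    exact (ZMod.intCast_zmod_eq_zero_iff_dvd c b).2 (Int.dvd_of_emod_eq_zero h.symm)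
  have hfrac_pos : (0 : ℝ) < ((c % b : ℤ) : ℝ) / b := by positivity
  have hfrac_lt : ((c % b : ℤ) : ℝ) / b < 1 :=
    (div_lt_one hbR).2 (by exact_mod_cast Int.emod_lt_of_pos c hb)
  have hsplit : (c : ℝ) / b = (c / b : ℤ) + ((c % b : ℤ) : ℝ) / b := by
    conv_lhs => rw [← Int.mul_ediv_add_emod c b]
    push_cast
    field_simp
  have hfloor : ⌊(c : ℝ) / b⌋ = c / b := by
    rw [hsplit, Int.floor_intCast_add, Int.floor_eq_zero_iff.2 ⟨hfrac_pos.le, hfrac_lt⟩, add_zero]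
  have hval : ((c : ZMod b).val : ℝ) = ((c % b : ℤ) : ℝ) := by exact_mod_cast ZMod.val_intCast c
  rw [saw, if_neg (by rw [hfloor, hsplit]; linarith), hfloor, hval, hsplit]
  ring

lemma sum_range_natCast (n : ℕ) : ∑ i ∈ range n, (i : ℝ) = n * (n - 1) / 2 := by
  rcases Nat.eq_zero_or_pos n with rfl | hn
  · simp
  have h := congrArg (Nat.cast : ℕ → ℝ) (sum_range_id_mul_two n)
  push_cast [Nat.cast_sub hn] at h
  linarith

lemma six_mul_sum_range_sq (n : ℕ) :
    6 * ∑ i ∈ range n, (i : ℤ) ^ 2 = n * (n - 1) * (2 * n - 1) := by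
  induction n with
  | zero => simp
  | succ k ih =>
    rw [sum_range_succ, mul_add, ih]
    push_cast
    ring

lemma one_sub_sq_mul_sum_range_sq_modEq {b : ℕ} (hb : Odd b) {t m : ℤ}
    (hm : 24 * m = (1 - t ^ 2) * (1 - b ^ 2)) :
    (1 - t ^ 2) * ∑ μ ∈ range b, (μ : ℤ) ^ 2 ≡ 4 * b * m [ZMOD b ^ 2] := by
  obtain ⟨k, hk⟩ : Odd (b : ℤ) := by exact_mod_cast hb
  have h6 := six_mul_sum_range_sq b
  rw [Int.modEq_iff_dvd]
  refine ⟨(t ^ 2 - 1) * k, mul_left_cancel₀ (by norm_num : (12 : ℤ) ≠ 0) ?_⟩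
  linear_combination 2 * b * hm - 2 * (1 - t ^ 2) * h6 - 6 * b ^ 2 * (1 - t ^ 2) * hk

def residueProductSum (b : ℕ) (c : ZMod b) : ℕ := ∑ μ ∈ range b, μ * (c * μ).val

section ResidueProductSum

variable {b : ℕ} [NeZero b]

lemma sum_range_eq_sum_zmod {M : Type*} [AddCommMonoid M] (f : ℕ → M) :
    ∑ μ ∈ range b, f μ = ∑ x : ZMod b, f x.val := by
  obtain ⟨n, rfl⟩ := Nat.exists_eq_succ_of_ne_zero (NeZero.ne b)
  exact (Fin.sum_univ_eq_sum_range f _).symm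

lemma sum_range_comp_val_mul {M : Type*} [AddCommMonoid M] {c : ZMod b} (hc : IsUnit c)
    (f : ℕ → M) : ∑ μ ∈ range b, f (c * μ).val = ∑ μ ∈ range b, f μ := by
  rw [sum_range_eq_sum_zmod (M := M), sum_range_eq_sum_zmod f]
  simp only [ZMod.natCast_zmod_val]
  exact Fintype.sum_equiv (Units.mulLeft hc.unit) _ _ fun _ => rfl

lemma dedekindSum_eq_residueProductSum {C : ℤ} (hC : IsUnit (C : ZMod b)) :
    dedekindSum C b = residueProductSum b C / b ^ 2 - (b - 1) / 4 := by
  have hbR : (b : ℝ) ≠ 0 := NeZero.ne _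
  have hterm : ∀ μ ∈ range b, saw (μ / b) * saw (C * μ / b)
      = μ * ((C * μ : ZMod b).val : ℝ) / b ^ 2 - μ / (2 * b) - ((C * μ : ZMod b).val : ℝ) / (2 * b)
        + 1 / 4 - if μ = 0 then 1 / 4 else 0 := by
    intro μ hμ
    rcases eq_or_ne μ 0 with rfl | hμ0
    · simp [saw_zero]
    have hμb : ((μ : ℤ) : ZMod b) ≠ 0 := by
      rw [Int.cast_natCast]
      exact natCast_zmod_ne_zero_of_lt hμ0 (mem_range.1 hμ)
    have hCμ : ((C * μ : ℤ) : ZMod b) ≠ 0 := by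
      rwa [Int.cast_mul, Ne, hC.mul_right_eq_zero]
    have h1 := saw_intCast_div_natCast hμb
    have h2 := saw_intCast_div_natCast hCμ
    push_cast at h1 h2
    rw [h1, h2, if_neg hμ0, ZMod.val_natCast_of_lt (mem_range.1 hμ)]
    field_simp
    ring
  have hperm : ∑ μ ∈ range b, ((C * μ : ZMod b).val : ℝ) = ∑ μ ∈ range b, (μ : ℝ) :=
    sum_range_comp_val_mul hC fun n => (n : ℝ)
  rw [dedekindSum, sum_congr rfl hterm]
  simp only [sum_sub_distrib, sum_add_distrib, ← sum_div, sum_ite_eq', mem_range,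
    Nat.pos_of_neZero, if_true, sum_const, card_range, nsmul_eq_mul, hperm, sum_range_natCast,
    residueProductSum, Nat.cast_sum, Nat.cast_mul]
  field_simp
  ring

lemma two_mul_residueProductSum_modEq {C : ℤ} (hC : IsUnit (C : ZMod b)) :
    2 * C * residueProductSum b C ≡ (1 + C ^ 2) * ∑ μ ∈ range b, (μ : ℤ) ^ 2 [ZMOD b ^ 2] := by
  have hperm : ∑ μ ∈ range b, ((C * μ : ZMod b).val : ℤ) ^ 2 = ∑ μ ∈ range b, (μ : ℤ) ^ 2 :=
    sum_range_comp_val_mul hC fun n => (n : ℤ) ^ 2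
  -- `(C μ mod b) ≡ C μ`, so the sum of the squared differences vanishes modulo `b ^ 2`
  have hexpand : (1 + C ^ 2) * ∑ μ ∈ range b, (μ : ℤ) ^ 2 - 2 * C * residueProductSum b C
      = ∑ μ ∈ range b, (((C * μ : ZMod b).val : ℤ) - C * μ) ^ 2 := by
    have hsplit : (1 + C ^ 2) * ∑ μ ∈ range b, (μ : ℤ) ^ 2
        = ∑ μ ∈ range b, (((C * μ : ZMod b).val : ℤ) ^ 2 + C ^ 2 * μ ^ 2) := by
      rw [sum_add_distrib, hperm, ← mul_sum]
      ring
    rw [hsplit, residueProductSum, Nat.cast_sum, mul_sum, ← sum_sub_distrib]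
    refine sum_congr rfl fun μ _ => ?_
    push_cast
    ring
  have hdvd : ∀ μ : ℕ, (b : ℤ) ∣ ((C * μ : ZMod b).val : ℤ) - C * μ := fun μ => by
    rw [← ZMod.intCast_zmod_eq_zero_iff_dvd]
    simp
  rw [Int.modEq_iff_dvd, hexpand]
  refine dvd_sum fun μ _ => ?_
  obtain ⟨k, hk⟩ := hdvd μ
  exact ⟨k ^ 2, by rw [hk]; ring⟩

lemma residueProductSum_sub_mul_modEq (hb : Odd b) {t h m : ℤ} (ht : IsUnit (t : ZMod b))
    (hh : IsUnit (h : ZMod b)) (hm : 24 * m = (1 - t ^ 2) * (1 - b ^ 2)) :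
    residueProductSum b h - t * residueProductSum b (t * h) ≡ 2 * b * m * h [ZMOD b ^ 2] := by
  have h1 := two_mul_residueProductSum_modEq hh
  have h2 := two_mul_residueProductSum_modEq (C := t * h) (by rw [Int.cast_mul]; exact ht.mul hh)
  have h3 := one_sub_sq_mul_sum_range_sq_modEq hb hm
  have hmul : 2 * t * h * (residueProductSum b h - t * residueProductSum b (t * h))
      ≡ 2 * t * h * (2 * b * m * h) [ZMOD b ^ 2] := by
    rw [Int.cast_mul] at h2
    calc _ = t * (2 * h * residueProductSum b h) - t * (2 * (t * h) * residueProductSum b (t * h))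
          := by ring
      _ ≡ t * ((1 + h ^ 2) * ∑ μ ∈ range b, (μ : ℤ) ^ 2)
            - t * ((1 + (t * h) ^ 2) * ∑ μ ∈ range b, (μ : ℤ) ^ 2) [ZMOD b ^ 2] :=
          (h1.mul_left _).sub (h2.mul_left _)
      _ = t * h ^ 2 * ((1 - t ^ 2) * ∑ μ ∈ range b, (μ : ℤ) ^ 2) := by ring
      _ ≡ t * h ^ 2 * (4 * b * m) [ZMOD b ^ 2] := h3.mul_left _
      _ = _ := by ring
  have hcop : IsCoprime ((b : ℤ) ^ 2) (2 * t * h) := by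
    rw [ZMod.coe_int_isUnit_iff_isCoprime] at ht hh
    exact ((Int.isCoprime_two_right.2 (by exact_mod_cast hb)).mul_right ht |>.mul_right hh).pow_left
  rw [Int.modEq_iff_dvd] at hmul ⊢
  exact hcop.dvd_of_dvd_mul_left (by rw [← mul_sub] at hmul; exact hmul)

lemma natCast_val_eq_natAbs_valMinAbs_add (hb : Odd b) (a : ZMod b) :
    (a.val : ZMod 2) = a.valMinAbs.natAbs + if b / 2 < a.val then 1 else 0 := by
  have hb2 : (b : ZMod 2) = 1 := ZMod.natCast_eq_one_iff_odd.2 hb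
  have hval := a.val_lt
  rw [ZMod.valMinAbs_def_pos]
  split_ifs with h1 h2 h2
  · omega
  · simp
  · have : ((a.val : ℤ) - b).natAbs = b - a.val := by omega
    rw [this, Nat.cast_sub hval.le, hb2]
    generalize (a.val : ZMod 2) = x
    revert x
    decide
  · omega

lemma natCast_residueProductSum_eq (hb : Odd b) {c : ZMod b} (hc : IsUnit c) :
    (residueProductSum b c : ZMod 2)
      = (b / 2 : ℕ) + ∑ x ∈ Ico 1 (b / 2).succ, ((x + (c * x).val : ℕ) : ZMod 2) := by
  obtain ⟨n, rfl⟩ := hb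
  have hhalf : (2 * n + 1) / 2 = n := by omega
  rw [hhalf]
  set f : ℕ → ZMod 2 := fun μ => ((μ * (c * μ).val : ℕ) : ZMod 2)
  have hreflect : ∑ μ ∈ Ico (n + 1) (2 * n + 1), f μ = ∑ μ ∈ Ico 1 (n + 1), f (2 * n + 1 - μ) := by
    rw [sum_Ico_reflect f 1 (m := n + 1) (n := 2 * n + 1) (by omega)]
    congr 2; omega
  -- `μ` and `b - μ` contribute `μ r + (b - μ) (b - r) ≡ 1 + μ + r` where `r = c μ mod b`
  have hpair : ∀ μ ∈ Ico 1 (n + 1),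
      f μ + f (2 * n + 1 - μ) = 1 + ((μ + (c * μ).val : ℕ) : ZMod 2) := by
    intro μ hμ
    obtain ⟨hμ1, hμn⟩ := mem_Ico.1 hμ
    have hcμ : c * μ ≠ 0 := by
      rw [Ne, hc.mul_right_eq_zero]
      exact natCast_zmod_ne_zero_of_lt (by omega) (by omega)
    have hneg : ((2 * n + 1 - μ : ℕ) : ZMod (2 * n + 1)) = -μ := by
      rw [Nat.cast_sub (by omega), ZMod.natCast_self, zero_sub]
    have hr := (c * μ).val_lt
    simp only [f, hneg, mul_neg, ZMod.neg_val, if_neg hcμ]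
    push_cast [Nat.cast_sub (show μ ≤ 2 * n + 1 by omega), Nat.cast_sub hr.le]
    generalize (μ : ZMod 2) = x
    generalize ((c * μ).val : ZMod 2) = y
    generalize (n : ZMod 2) = z
    revert x y z
    decide
  have hsplit : ∑ μ ∈ range (2 * n + 1), f μ
      = ∑ μ ∈ Ico 1 (n + 1), f μ + ∑ μ ∈ Ico (n + 1) (2 * n + 1), f μ := by
    rw [range_eq_Ico, ← sum_Ico_consecutive f (n := n + 1) (by omega) (by omega),
      sum_eq_sum_Ico_succ_bot (by omega)]
    simp [f]
  rw [residueProductSum, Nat.cast_sum, hsplit, hreflect, ← sum_add_distrib, sum_congr rfl hpair,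
    sum_add_distrib, sum_const, Nat.card_Ico]
  simp

end ResidueProductSum

section Prime

variable {b : ℕ} [Fact b.Prime]

lemma sum_Ico_natCast_add_val_mul_eq_card (hb : b ≠ 2) {c : ZMod b} (hc : c ≠ 0) :
    ∑ x ∈ Ico 1 (b / 2).succ, ((x + (c * x).val : ℕ) : ZMod 2)
      = #{x ∈ Ico 1 (b / 2).succ | b / 2 < (c * ((x : ℕ) : ZMod b)).val} := by
  have hbodd : Odd b := (Fact.out : b.Prime).odd_of_ne_two hb
  have habs : ∑ x ∈ Ico 1 (b / 2).succ, ((c * x).valMinAbs.natAbs : ZMod 2)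
      = ∑ x ∈ Ico 1 (b / 2).succ, (x : ZMod 2) := by
    have h := congrArg (fun s => (s.map (Nat.cast : ℕ → ZMod 2)).sum)
      (ZMod.Ico_map_valMinAbs_natAbs_eq_Ico_map_id b c hc)
    simp only [Multiset.map_map] at h
    rw [sum_eq_multiset_sum, sum_eq_multiset_sum]
    exact h
  simp only [Nat.cast_add, natCast_val_eq_natAbs_valMinAbs_add hbodd]
  rw [sum_add_distrib, sum_add_distrib, habs, ← add_assoc, CharTwo.add_self_eq_zero, zero_add,
    sum_boole]

lemma neg_one_pow_residueProductSum (hb : b ≠ 2) {C : ℤ} (hC : (C : ZMod b) ≠ 0) :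
    (-1 : ℤ) ^ residueProductSum b C = (-1) ^ (b / 2) * legendreSym b C := by
  have hbodd : Odd b := (Fact.out : b.Prime).odd_of_ne_two hb
  have hpar := natCast_residueProductSum_eq hbodd (isUnit_iff_ne_zero.2 hC)
  rw [sum_Ico_natCast_add_val_mul_eq_card hb hC, ← Nat.cast_add,
    ZMod.natCast_eq_natCast_iff'] at hpar
  rw [neg_one_pow_eq_pow_mod_two, hpar, ← neg_one_pow_eq_pow_mod_two, pow_add,
    ZMod.gauss_lemma hb hC]

lemma exists_dedekindSum_sub_mul_eq (hb : b ≠ 2) {t h m : ℤ}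
    (htodd : Odd t) (ht : (t : ZMod b) ≠ 0) (hh : (h : ZMod b) ≠ 0)
    (hm : 24 * m = (1 - t ^ 2) * (1 - b ^ 2)) :
    ∃ q : ℤ, (q.negOnePow : ℤ) = legendreSym b t ∧
      dedekindSum h b - t * dedekindSum (t * h) b = 2 * m * h / b + q - (1 - t) * (b - 1) / 4 := by
  have hbodd : Odd b := (Fact.out : b.Prime).odd_of_ne_two hb
  have hth : ((t * h : ℤ) : ZMod b) ≠ 0 := by rw [Int.cast_mul]; exact mul_ne_zero ht hh
  obtain ⟨q, hq⟩ := (residueProductSum_sub_mul_modEq hbodd (isUnit_iff_ne_zero.2 ht)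
    (isUnit_iff_ne_zero.2 hh) hm).symm.dvd
  rw [← Int.cast_mul] at hq
  set U₁ : ℤ := (residueProductSum b h : ℤ)
  set U₂ : ℤ := (residueProductSum b (t * h : ℤ) : ℤ)
  refine ⟨q, ?_, ?_⟩
  · obtain ⟨k, hk⟩ : Odd (b : ℤ) := by exact_mod_cast hbodd
    obtain ⟨j, hj⟩ := htodd
    -- `b` and `t` are odd, so `q ≡ U₁ - t U₂ ≡ U₁ + U₂ (mod 2)`
    have hpar : q.negOnePow = U₁.negOnePow * U₂.negOnePow := by
      rw [(Int.negOnePow_eq_iff q (U₁ - t * U₂)).2 ⟨-(b * m * h) - 2 * (k ^ 2 + k) * q, by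
          linear_combination -hq - (q * (b + 2 * k + 1)) * hk⟩, Int.negOnePow_sub,
        (Int.negOnePow_eq_iff (t * U₂) U₂).2 ⟨j * U₂, by linear_combination U₂ * hj⟩]
    have hU₁ := neg_one_pow_residueProductSum hb hh
    have hU₂ := neg_one_pow_residueProductSum hb hth
    rw [hpar, Units.val_mul, Int.coe_negOnePow_natCast, Int.coe_negOnePow_natCast, hU₁, hU₂,
      legendreSym.mul]
    have hsign : ((-1 : ℤ) ^ (b / 2)) ^ 2 = 1 := by
      rw [← pow_mul, mul_comm, pow_mul, neg_one_sq, one_pow]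
    linear_combination (legendreSym b t * ((-1) ^ (b / 2)) ^ 2) * legendreSym.sq_one b hh
      + legendreSym b t * hsign
  · have hqR : (U₁ : ℝ) - t * U₂ - 2 * b * m * h = b ^ 2 * q := by exact_mod_cast hq
    have hbR : (b : ℝ) ≠ 0 := Nat.cast_ne_zero.2 (NeZero.ne b)
    rw [dedekindSum_eq_residueProductSum (isUnit_iff_ne_zero.2 hh),
      dedekindSum_eq_residueProductSum (isUnit_iff_ne_zero.2 hth)]
    field_simp
    linear_combination 4 * hqR

lemma dedekindOmega_div_pow_eq (hb : b ≠ 2) {t : ℕ} {h m k : ℤ}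
    (htodd : Odd t) (ht : (t : ZMod b) ≠ 0) (hh : (h : ZMod b) ≠ 0)
    (hm : 24 * m = (1 - t ^ 2) * (1 - b ^ 2)) (hk : 4 * k = (1 - t) * (b - 1)) :
    dedekindOmega h b / dedekindOmega (t * h) b ^ t
      = legendreSym b t * (-1 : ℂ) ^ k * exp (2 * π * I * m * h / b) := by
  obtain ⟨q, hqL, hs⟩ := exists_dedekindSum_sub_mul_eq hb (t := t) (by exact_mod_cast htodd)
    (by exact_mod_cast ht) hh hm
  have hsC : ((dedekindSum h b - t * dedekindSum (t * h) b : ℝ) : ℂ)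
      = ((2 * m * h / b + q - (1 - t) * (b - 1) / 4 : ℝ) : ℂ) := congrArg _ hs
  have hkC : (4 * k : ℂ) = (1 - t) * (b - 1) := by exact_mod_cast hk
  push_cast at hsC
  have hexp : π * I * dedekindSum h b - t * (π * I * dedekindSum (t * h) b)
      = 2 * π * I * m * h / b + q * (π * I) + (-k : ℤ) * (π * I) := by
    push_cast
    linear_combination (π * I) * hsC + (π * I / 4) * hkC
  have hsign_q : (-1 : ℂ) ^ q = legendreSym b t := by
    rw [← Int.cast_negOnePow, hqL]
  have hsign_k : (-1 : ℂ) ^ (-k) = (-1) ^ k := by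
    rw [← Int.cast_negOnePow, ← Int.cast_negOnePow, Int.negOnePow_neg]
  rw [dedekindOmega, dedekindOmega, ← Complex.exp_nat_mul, ← Complex.exp_sub, hexp,
    Complex.exp_add, Complex.exp_add, Complex.exp_int_mul, Complex.exp_int_mul, exp_pi_mul_I,
    hsign_q, hsign_k]
  ring

end Prime

lemma sum_range_eq_add_sum_Icc {M : Type*} [AddCommMonoid M] {n : ℕ} (hn : n ≠ 0) (f : ℕ → M) :
    ∑ i ∈ range n, f i = f 0 + ∑ i ∈ Icc 1 (n - 1), f i := by
  have hIco : Ico 1 n = Icc 1 (n - 1) := by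
    ext i
    simp only [mem_Ico, mem_Icc]
    omega
  rw [range_eq_Ico, sum_eq_sum_Ico_succ_bot (Nat.pos_of_ne_zero hn), zero_add, hIco]

lemma sum_Icc_exp_eq_ite (b : ℕ) [NeZero b] (c : ℤ) :
    ∑ h ∈ Icc 1 (b - 1), exp (2 * π * I * c * h / b)
      = if (b : ℤ) ∣ c then (b : ℂ) - 1 else -1 := by
  have hζ := Complex.isPrimitiveRoot_exp b (NeZero.ne b)
  have hterm : ∀ h : ℕ, exp (2 * π * I * c * h / b) = (exp (2 * π * I / b) ^ c) ^ h := by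
    intro h
    rw [← zpow_natCast, ← zpow_mul, ← Complex.exp_int_mul]
    push_cast
    ring_nf
  simp only [hterm]
  split_ifs with hdvd
  · rw [(hζ.zpow_eq_one_iff_dvd c).2 hdvd]
    simp [Nat.cast_sub NeZero.one_le]
  · have hne : exp (2 * π * I / b) ^ c ≠ 1 := mt (hζ.zpow_eq_one_iff_dvd c).1 hdvd
    have hpow : (exp (2 * π * I / b) ^ c) ^ b = 1 := by
      rw [← zpow_natCast, ← zpow_mul, mul_comm c, zpow_mul, zpow_natCast, hζ.pow_eq_one, one_zpow]
    have hrange := sum_range_eq_add_sum_Icc (NeZero.ne b) fun h => (exp (2 * π * I / b) ^ c) ^ h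
    rw [geom_sum_eq hne, hpow, sub_self, zero_div, pow_zero] at hrange
    linear_combination -hrange

lemma twentyfour_dvd_one_sub_sq_mul {t b : ℤ} (ht : Odd t) (htb : IsCoprime t b) :
    24 ∣ (1 - t ^ 2) * (1 - b ^ 2) := by
  have h8 : (8 : ℤ) ∣ 1 - t ^ 2 := by
    obtain ⟨k, rfl⟩ := ht
    obtain ⟨j, hj⟩ := Int.even_mul_succ_self k
    exact ⟨-j, by linear_combination -4 * hj⟩
  have h3 : (3 : ℤ) ∣ (1 - t ^ 2) * (1 - b ^ 2) := by
    have hsq : ∀ x y : ZMod 3, x ≠ 0 ∨ y ≠ 0 → (1 - x ^ 2) * (1 - y ^ 2) = 0 := by decide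
    have hxy : (t : ZMod 3) ≠ 0 ∨ (b : ZMod 3) ≠ 0 := by
      rw [Ne, Ne, ZMod.intCast_zmod_eq_zero_iff_dvd, ZMod.intCast_zmod_eq_zero_iff_dvd,
        ← not_and_or]
      rintro ⟨h1, h2⟩
      exact absurd (htb.isUnit_of_dvd' h1 h2) (by norm_num [Int.isUnit_iff])
    exact_mod_cast (ZMod.intCast_zmod_eq_zero_iff_dvd _ 3).1 (by push_cast; exact hsq _ _ hxy)
  exact (by norm_num : IsCoprime (8 : ℤ) 3).mul_dvd (dvd_mul_of_dvd_left h8 _) h3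

theorem Ksum_eval_odd_general (b : ℕ) [Fact b.Prime] (hb : b ≠ 2) (a n : ℤ) (t : ℕ)
    (hcop : Nat.Coprime t b) (htodd : Odd t) :
    Ksum a b t n
      = ((if ((1 - (t : ℤ) ^ 2) * (1 - (b : ℤ) ^ 2) / 24 + a * t - n) % b = 0
            then ((b : ℤ) - 1) else -1 : ℤ) : ℂ)
        * (-1 : ℂ) ^ ((1 - (t : ℤ)) * ((b : ℤ) - 1) / 4)
        * (legendreSym b t : ℂ) := by
  have hbodd : Odd (b : ℤ) := by exact_mod_cast (Fact.out : b.Prime).odd_of_ne_two hb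
  have htodd' : Odd (t : ℤ) := by exact_mod_cast htodd
  obtain ⟨m, hm⟩ := twentyfour_dvd_one_sub_sq_mul htodd' (Nat.isCoprime_iff_coprime.2 hcop)
  obtain ⟨k, hk⟩ : (4 : ℤ) ∣ (1 - t) * (b - 1) := mul_dvd_mul
    (even_iff_two_dvd.1 (odd_one.sub_odd htodd')) (even_iff_two_dvd.1 (hbodd.sub_odd odd_one))
  have ht : (t : ZMod b) ≠ 0 := by
    rw [Ne, ZMod.natCast_eq_zero_iff]
    exact (Nat.Prime.coprime_iff_not_dvd Fact.out).1 hcop.symm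
  have hsummand : ∀ h ∈ Icc 1 (b - 1), dedekindOmega h b / dedekindOmega (t * h) b ^ t
        * exp (2 * π * I * (a * t - n) * h / b)
      = legendreSym b t * (-1 : ℂ) ^ k * exp (2 * π * I * (m + a * t - n : ℤ) * h / b) := by
    intro h hh
    have hh0 : ((h : ℤ) : ZMod b) ≠ 0 := by
      rw [Int.cast_natCast]
      exact natCast_zmod_ne_zero_of_lt (by grind) (by grind)
    rw [dedekindOmega_div_pow_eq hb htodd ht hh0 hm.symm hk.symm, mul_assoc, ← Complex.exp_add]
    push_cast
    ring_nf
  rw [Ksum, sum_congr rfl hsummand, ← mul_sum, sum_Icc_exp_eq_ite, hm, hk,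
    Int.mul_ediv_cancel_left _ (by norm_num), Int.mul_ediv_cancel_left _ (by norm_num)]
  simp only [← Int.dvd_iff_emod_eq_zero]
  split_ifs <;> push_cast <;> ring

/-- Evaluation of `K(a,b,t;n)` for odd `t`. -/
theorem Ksum_eval_odd (b : ℕ) [Fact b.Prime] (hb : b ≠ 2) (a n : ℤ) (t : ℕ)
    (ht : 1 < t) (hcop : Nat.Coprime t b) (htodd : Odd t) :
    Ksum a b t n
      = ((if ((1 - (t : ℤ) ^ 2) * (1 - (b : ℤ) ^ 2) / 24 + a * t - n) % b = 0
            then ((b : ℤ) - 1) else -1 : ℤ) : ℂ)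
        * (-1 : ℂ) ^ ((1 - (t : ℤ)) * ((b : ℤ) - 1) / 4)
        * (legendreSym b t : ℂ) :=
  Ksum_eval_odd_general b hb a n t hcop htodd
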